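/- For all real numbers γ, β_p, β, the disorder-averaged magnetization equals the disorder-averaged two-replica overlap at temperatures β and β_p: Σ_τ w_τ · (Σ_S ((1/N)·Σ_{v∈V} S(v)) · exp(β·H_τ(S))) / Z_τ(β) = Σ_τ w_τ · (Σ_{S¹,S²} ((1/N)·Σ_{v∈V} S¹(v)·S²(v)) · exp(β·H_τ(S¹) + β_p·H_τ(S²))) / (Z_τ(β)·Z_τ(β_p)), where w_τ = Z_τ(γ)·exp(β_p·Σ_{e∈E} τ(e)) / Z_τ(β_p). In particular, on the Nishimori line β = β_p the magnetization equals the spin-glass order parameter. -/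
import Mathlib


open Finset

/-- Ising energy H_t(S), spins valued in the units of the integers, i.e. {-1, 1}. -/
noncomputable def isingH {V E : Type*} [Fintype E] (i j : E → V)
    (τ : E → ℤˣ) (S : V → ℤˣ) : ℝ :=
  ∑ e, ((τ e : ℤ) : ℝ) * ((S (i e) : ℤ) : ℝ) * ((S (j e) : ℤ) : ℝ)

/-- Partition function Z_t(b). -/
noncomputable def isingZ {V E : Type*} [Fintype V] [DecidableEq V] [Fintype E]
    (i j : E → V) (β : ℝ) (τ : E → ℤˣ) : ℝ :=
  ∑ S : V → ℤˣ, Real.exp (β * isingH i j τ S)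

section NishimoriAux

set_option linter.unusedSectionVars false
set_option linter.unusedVariables false

variable {V E : Type*} [Fintype V] [DecidableEq V] [Fintype E] [DecidableEq E]

/-- Gauge transformation of the disorder by σ. -/
def nGauge (i j : E → V) (σ : V → ℤˣ) (τ : E → ℤˣ) : E → ℤˣ :=
  fun e => τ e * σ (i e) * σ (j e)

lemma units_cast_mul_self (u : ℤˣ) : ((u : ℤ) : ℝ) * ((u : ℤ) : ℝ) = 1 := by
  rw [← Int.cast_mul, ← Units.val_mul, Int.units_mul_self u, Units.val_one, Int.cast_one]

lemma cast_mul_cancel (a c : ℤˣ) : (((a * c : ℤˣ) : ℤ) : ℝ) * ((c : ℤ) : ℝ) = ((a : ℤ) : ℝ) := by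
  push_cast
  rw [mul_assoc, units_cast_mul_self, mul_one]

lemma overlap_gauge (a b c : ℤˣ) :
    (((a * c : ℤˣ) : ℤ) : ℝ) * (((b * c : ℤˣ) : ℤ) : ℝ) = ((a : ℤ) : ℝ) * ((b : ℤ) : ℝ) := by
  push_cast
  rw [mul_mul_mul_comm, units_cast_mul_self, mul_one]

lemma spinmul_invol (σ : V → ℤˣ) :
    Function.Involutive (fun (S : V → ℤˣ) => fun v => S v * σ v) := by
  intro S; funext v
  simp [mul_assoc, Int.units_mul_self]

lemma nGauge_invol (i j : E → V) (σ : V → ℤˣ) : Function.Involutive (nGauge i j σ) := by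
  intro τ; funext e
  show τ e * σ (i e) * σ (j e) * σ (i e) * σ (j e) = τ e
  rw [mul_right_comm (τ e * σ (i e)) (σ (j e)) (σ (i e)), mul_assoc (τ e),
    Int.units_mul_self, mul_one, mul_assoc, Int.units_mul_self, mul_one]

lemma sum_spinmul {α : Type*} [AddCommMonoid α] (σ : V → ℤˣ) (g : (V → ℤˣ) → α) :
    ∑ S : V → ℤˣ, g (fun v => S v * σ v) = ∑ S : V → ℤˣ, g S :=
  Fintype.sum_bijective _ (spinmul_invol σ).bijective _ g (fun _ => rfl)

lemma sum_spinmul2 {α : Type*} [AddCommMonoid α] (σ : V → ℤˣ)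
    (g : (V → ℤˣ) → (V → ℤˣ) → α) :
    ∑ S1 : V → ℤˣ, ∑ S2 : V → ℤˣ, g (fun v => S1 v * σ v) (fun v => S2 v * σ v)
      = ∑ S1 : V → ℤˣ, ∑ S2 : V → ℤˣ, g S1 S2 :=
  calc ∑ S1 : V → ℤˣ, ∑ S2 : V → ℤˣ, g (fun v => S1 v * σ v) (fun v => S2 v * σ v)
      = ∑ S1 : V → ℤˣ, ∑ S2 : V → ℤˣ, g (fun v => S1 v * σ v) S2 :=
        Finset.sum_congr rfl fun S1 _ => sum_spinmul σ (g _)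
    _ = ∑ S1 : V → ℤˣ, ∑ S2 : V → ℤˣ, g S1 S2 :=
        sum_spinmul σ (fun S1 => ∑ S2 : V → ℤˣ, g S1 S2)

lemma sum_nGauge {α : Type*} [AddCommMonoid α] (i j : E → V) (σ : V → ℤˣ)
    (g : (E → ℤˣ) → α) :
    ∑ τ : E → ℤˣ, g (nGauge i j σ τ) = ∑ τ : E → ℤˣ, g τ :=
  Fintype.sum_bijective _ (nGauge_invol i j σ).bijective _ g (fun _ => rfl)

lemma isingH_gauge (i j : E → V) (σ : V → ℤˣ) (τ : E → ℤˣ) (S : V → ℤˣ) :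
    isingH i j (nGauge i j σ τ) S = isingH i j τ (fun v => S v * σ v) := by
  unfold isingH nGauge
  refine Finset.sum_congr rfl fun e _ => ?_
  push_cast
  ring

lemma sum_vals_gauge (i j : E → V) (σ : V → ℤˣ) (τ : E → ℤˣ) :
    ∑ e, ((nGauge i j σ τ e : ℤ) : ℝ) = isingH i j τ σ := by
  unfold isingH nGauge
  refine Finset.sum_congr rfl fun e _ => ?_
  push_cast
  ring

lemma isingZ_gauge (i j : E → V) (β : ℝ) (σ : V → ℤˣ) (τ : E → ℤˣ) :
    isingZ i j β (nGauge i j σ τ) = isingZ i j β τ := by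
  unfold isingZ
  simp only [isingH_gauge]
  exact sum_spinmul σ (fun S => Real.exp (β * isingH i j τ S))

lemma isingZ_pos (i j : E → V) (β : ℝ) (τ : E → ℤˣ) : 0 < isingZ i j β τ :=
  Finset.sum_pos (fun S _ => Real.exp_pos _) Finset.univ_nonempty

end NishimoriAux

/-- the disorder-averaged magnetization equals the disorder-averaged
two-replica overlap at temperatures β and β_p. -/
theorem stmt_7 {V E : Type*} [Fintype V] [DecidableEq V] [Fintype E] [DecidableEq E]
    (i j : E → V) (hij : ∀ e, i e ≠ j e)
    (γ βp β : ℝ) :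
    ∑ τ : E → ℤˣ,
        (isingZ i j γ τ * Real.exp (βp * ∑ e, ((τ e : ℤ) : ℝ)) / isingZ i j βp τ) *
          ((∑ S : V → ℤˣ,
              ((1 / (Fintype.card V : ℝ)) * ∑ v, ((S v : ℤ) : ℝ)) *
                Real.exp (β * isingH i j τ S)) / isingZ i j β τ)
      = ∑ τ : E → ℤˣ,
          (isingZ i j γ τ * Real.exp (βp * ∑ e, ((τ e : ℤ) : ℝ)) / isingZ i j βp τ) *
            ((∑ S1 : V → ℤˣ, ∑ S2 : V → ℤˣ,
                ((1 / (Fintype.card V : ℝ)) * ∑ v, ((S1 v : ℤ) : ℝ) * ((S2 v : ℤ) : ℝ)) *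
                  Real.exp (β * isingH i j τ S1 + βp * isingH i j τ S2)) /
              (isingZ i j β τ * isingZ i j βp τ)) := by
  classical
  set N : ℝ := (Fintype.card V : ℝ) with hN
  set F : (E → ℤˣ) → ℝ := fun τ =>
    (isingZ i j γ τ * Real.exp (βp * ∑ e, ((τ e : ℤ) : ℝ)) / isingZ i j βp τ) *
      ((∑ S : V → ℤˣ, ((1 / N) * ∑ v, ((S v : ℤ) : ℝ)) * Real.exp (β * isingH i j τ S)) /
        isingZ i j β τ) with hF
  set G : (E → ℤˣ) → ℝ := fun τ =>
    (isingZ i j γ τ * Real.exp (βp * ∑ e, ((τ e : ℤ) : ℝ)) / isingZ i j βp τ) *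
      ((∑ S1 : V → ℤˣ, ∑ S2 : V → ℤˣ,
          ((1 / N) * ∑ v, ((S1 v : ℤ) : ℝ) * ((S2 v : ℤ) : ℝ)) *
            Real.exp (β * isingH i j τ S1 + βp * isingH i j τ S2)) /
        (isingZ i j β τ * isingZ i j βp τ)) with hG
  show ∑ τ, F τ = ∑ τ, G τ
  -- key per-disorder identity
  have key : ∀ τ : E → ℤˣ,
      ∑ σ : V → ℤˣ, F (nGauge i j σ τ) = ∑ σ : V → ℤˣ, G (nGauge i j σ τ) := by
    intro τ
    set Zg := isingZ i j γ τ with hZg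
    set Zp := isingZ i j βp τ with hZp
    set Zb := isingZ i j β τ with hZb
    have hZp0 : Zp ≠ 0 := ne_of_gt (isingZ_pos i j βp τ)
    have hZb0 : Zb ≠ 0 := ne_of_gt (isingZ_pos i j β τ)
    set D : ℝ := ∑ S1 : V → ℤˣ, ∑ S2 : V → ℤˣ,
        ((1 / N) * ∑ v, ((S1 v : ℤ) : ℝ) * ((S2 v : ℤ) : ℝ)) *
          Real.exp (β * isingH i j τ S1 + βp * isingH i j τ S2) with hD
    -- D is gauge invariant
    have hDinv : ∀ σ : V → ℤˣ,
        (∑ S1 : V → ℤˣ, ∑ S2 : V → ℤˣ,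
          ((1 / N) * ∑ v, ((S1 v : ℤ) : ℝ) * ((S2 v : ℤ) : ℝ)) *
            Real.exp (β * isingH i j (nGauge i j σ τ) S1 + βp * isingH i j (nGauge i j σ τ) S2))
          = D := by
      intro σ
      simp only [isingH_gauge]
      rw [hD]
      refine Eq.trans ?_ (sum_spinmul2 σ (fun A B =>
        ((1 / N) * ∑ v, ((A v : ℤ) : ℝ) * ((B v : ℤ) : ℝ)) *
          Real.exp (β * isingH i j τ A + βp * isingH i j τ B)))
      refine Finset.sum_congr rfl fun S1 _ => Finset.sum_congr rfl fun S2 _ => ?_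
      simp only [overlap_gauge]
    -- gauge-transformed magnetization numerator
    have hnum : ∀ σ : V → ℤˣ,
        (∑ S : V → ℤˣ, ((1 / N) * ∑ v, ((S v : ℤ) : ℝ)) *
            Real.exp (β * isingH i j τ (fun v => S v * σ v)))
          = ∑ S : V → ℤˣ, ((1 / N) * ∑ v, ((S v : ℤ) : ℝ) * ((σ v : ℤ) : ℝ)) *
              Real.exp (β * isingH i j τ S) := by
      intro σ
      refine Eq.trans ?_ (sum_spinmul σ (fun S =>
        ((1 / N) * ∑ v, ((S v : ℤ) : ℝ) * ((σ v : ℤ) : ℝ)) * Real.exp (β * isingH i j τ S)))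
      refine Finset.sum_congr rfl fun S _ => ?_
      simp only [cast_mul_cancel]
    have hFg : ∀ σ : V → ℤˣ, F (nGauge i j σ τ) =
        (Zg * Real.exp (βp * isingH i j τ σ) / Zp) *
          ((∑ S : V → ℤˣ, ((1 / N) * ∑ v, ((S v : ℤ) : ℝ) * ((σ v : ℤ) : ℝ)) *
              Real.exp (β * isingH i j τ S)) / Zb) := by
      intro σ
      simp only [hF]
      simp only [isingZ_gauge, sum_vals_gauge, isingH_gauge]
      rw [← hZg, ← hZp, ← hZb, hnum σ]
    have hGg : ∀ σ : V → ℤˣ, G (nGauge i j σ τ) =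
        (Zg * Real.exp (βp * isingH i j τ σ) / Zp) * (D / (Zb * Zp)) := by
      intro σ
      simp only [hG]
      simp only [isingZ_gauge, sum_vals_gauge]
      rw [← hZg, ← hZp, ← hZb, hDinv σ]
    simp only [hFg, hGg]
    rw [← Finset.sum_mul]
    have hsum : ∑ σ : V → ℤˣ, Real.exp (βp * isingH i j τ σ) = Zp := rfl
    have expand : ∀ σ : V → ℤˣ,
        (Zg * Real.exp (βp * isingH i j τ σ) / Zp) *
          ((∑ S : V → ℤˣ, ((1 / N) * ∑ v, ((S v : ℤ) : ℝ) * ((σ v : ℤ) : ℝ)) *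
              Real.exp (β * isingH i j τ S)) / Zb)
        = (Zg / (Zp * Zb)) *
          ∑ S : V → ℤˣ, ((1 / N) * ∑ v, ((S v : ℤ) : ℝ) * ((σ v : ℤ) : ℝ)) *
              Real.exp (β * isingH i j τ S + βp * isingH i j τ σ) := by
      intro σ
      rw [Finset.sum_div, Finset.mul_sum, Finset.mul_sum]
      refine Finset.sum_congr rfl fun S _ => ?_
      rw [Real.exp_add]
      ring
    have lhs_eq : ∑ σ : V → ℤˣ,
        (Zg * Real.exp (βp * isingH i j τ σ) / Zp) *
          ((∑ S : V → ℤˣ, ((1 / N) * ∑ v, ((S v : ℤ) : ℝ) * ((σ v : ℤ) : ℝ)) *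
              Real.exp (β * isingH i j τ S)) / Zb)
        = (Zg / (Zp * Zb)) * D := by
      simp only [expand]
      rw [← Finset.mul_sum]
      congr 1
      rw [hD]
      exact Finset.sum_comm
    rw [lhs_eq]
    have hZpsum : ∑ σ : V → ℤˣ, Zg * Real.exp (βp * isingH i j τ σ) / Zp = Zg := by
      rw [← Finset.sum_div, ← Finset.mul_sum, hsum, mul_div_assoc, div_self hZp0, mul_one]
    rw [hZpsum, mul_comm Zp Zb]
    ring
  -- globalize via the gauge bijection
  have glob : (Fintype.card (V → ℤˣ) : ℝ) * (∑ τ, F τ) =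
      (Fintype.card (V → ℤˣ) : ℝ) * (∑ τ, G τ) := by
    have h1 : ∀ (g : (E → ℤˣ) → ℝ),
        ∑ σ : V → ℤˣ, ∑ τ : E → ℤˣ, g (nGauge i j σ τ)
          = (Fintype.card (V → ℤˣ) : ℝ) * ∑ τ, g τ := by
      intro g
      rw [Finset.sum_congr rfl (fun σ _ => sum_nGauge i j σ g), Finset.sum_const,
        Finset.card_univ, nsmul_eq_mul]
    calc (Fintype.card (V → ℤˣ) : ℝ) * (∑ τ, F τ)
        = ∑ σ : V → ℤˣ, ∑ τ : E → ℤˣ, F (nGauge i j σ τ) := (h1 F).symm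
      _ = ∑ τ : E → ℤˣ, ∑ σ : V → ℤˣ, F (nGauge i j σ τ) := Finset.sum_comm
      _ = ∑ τ : E → ℤˣ, ∑ σ : V → ℤˣ, G (nGauge i j σ τ) :=
          Finset.sum_congr rfl fun τ _ => key τ
      _ = ∑ σ : V → ℤˣ, ∑ τ : E → ℤˣ, G (nGauge i j σ τ) := Finset.sum_comm
      _ = (Fintype.card (V → ℤˣ) : ℝ) * ∑ τ, G τ := h1 G
  have hc : (Fintype.card (V → ℤˣ) : ℝ) ≠ 0 := by
    exact_mod_cast Fintype.card_ne_zero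
  exact mul_left_cancel₀ hc glob
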